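/- For a sparse JL distribution, if x ∈ ℝⁿ satisfies ||x||_∞ ≤ v and ||x||₂ ≤ 1, and T is an even natural number, then ||Z_r(x)||_T = ||Σ_{i≠j} η_{r,i}η_{r,j}σ_{r,i}σ_{r,j}x_ix_j||_T ≲ v²·sup_{1≤t≤T/2} (T²/t²)·(s/(mTv²))^{1/t}, where the supremum is over integers t. -/

import Mathlib

open MeasureTheory ProbabilityTheory Real Finset
open scoped BigOperators ENNReal NNReal Classical

noncomputable section

/-- Euclidean (`ℓ₂`) norm of a finite real vector. -/
def l2 {k : ℕ} (x : Fin k → ℝ) : ℝ := Real.sqrt (∑ i, x i ^ 2)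

/-- Sup (`ℓ_∞`) norm of a finite real vector. -/
def linf {k : ℕ} (x : Fin k → ℝ) : ℝ := ⨆ i, |x i|

/-- The moment norm `‖X‖_q = (E |X|^q)^{1/q}`. -/
def mom {Ω : Type*} [MeasurableSpace Ω] (μ : Measure Ω) (q : ℝ) (X : Ω → ℝ) : ℝ :=
  (∫ ω, |X ω| ^ q ∂μ) ^ (1 / q)

/-- A sparse JL distribution, presented by the random families `σ` (Rademachers) and
`η` (Bernoulli selectors) on a probability space. -/
structure SparseJL {Ω : Type*} [MeasurableSpace Ω] (μ : Measure Ω) (n m s : ℕ) where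
  σ : Fin m → Fin n → Ω → ℝ
  η : Fin m → Fin n → Ω → ℝ
  σ_meas : ∀ r i, Measurable (σ r i)
  η_meas : ∀ r i, Measurable (η r i)
  σ_rademacher : ∀ r i, μ {ω | σ r i ω = 1} = 1/2 ∧ μ {ω | σ r i ω = -1} = 1/2
  σ_indep : iIndepFun (fun p ω => σ p.1 p.2 ω : Fin m × Fin n → Ω → ℝ) μ
  η_bool : ∀ r i ω, η r i ω = 0 ∨ η r i ω = 1
  η_mean : ∀ r i, ∫ ω, η r i ω ∂μ = (s : ℝ) / (m : ℝ)
  σ_η_indep : IndepFun (fun ω (p : Fin m × Fin n) => σ p.1 p.2 ω)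
      (fun ω (p : Fin m × Fin n) => η p.1 p.2 ω) μ
  η_cols_indep : iIndepFun (fun i ω r => η r i ω : Fin n → Ω → Fin m → ℝ) μ
  η_col_sum : ∀ i ω, ∑ r, η r i ω = (s : ℝ)
  η_neg_corr : ∀ i (S : Finset (Fin m)),
      ∫ ω, ∏ r ∈ S, η r i ω ∂μ ≤ ((s : ℝ) / (m : ℝ)) ^ S.card

/-- A uniform sparse JL distribution: each column's support is a uniformly random
`s`-subset of the rows. -/
structure UniformSparseJL {Ω : Type*} [MeasurableSpace Ω] (μ : Measure Ω) (n m s : ℕ)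
    extends SparseJL μ n m s where
  uniform : ∀ (i : Fin n) (S : Finset (Fin m)), S.card = s →
      μ {ω | ∀ r, η r i ω = if r ∈ S then 1 else 0} = ((Nat.choose m s : ℝ≥0∞))⁻¹

namespace SparseJL

variable {Ω : Type*} [MeasurableSpace Ω] {μ : Measure Ω} {n m s : ℕ}

/-- The random matrix entry `A_{r,i} = η_{r,i} σ_{r,i} / √s`. -/
def A (J : SparseJL μ n m s) (ω : Ω) (r : Fin m) (i : Fin n) : ℝ :=
  J.η r i ω * J.σ r i ω / Real.sqrt s

/-- The row error term `Z_r(x) = Σ_{i ≠ j} η_{r,i} η_{r,j} σ_{r,i} σ_{r,j} x_i x_j`. -/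
def Z (J : SparseJL μ n m s) (r : Fin m) (x : Fin n → ℝ) (ω : Ω) : ℝ :=
  ∑ i, ∑ j, if i ≠ j then
    J.η r i ω * J.η r j ω * J.σ r i ω * J.σ r j ω * x i * x j else 0

/-- The error term `R(x) = (1/s) Σ_r Z_r(x)`. -/
def R (J : SparseJL μ n m s) (x : Fin n → ℝ) (ω : Ω) : ℝ :=
  (1 / (s : ℝ)) * ∑ r, J.Z r x ω

/-- `v(m, ε, δ, s)`: the sup of all `v ∈ [0,1]` such that the JL norm-preservation
condition holds with distortion `ε` and failure probability `δ` on
`S_v = {x : ‖x‖_∞ ≤ v ‖x‖₂}`. -/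
def vstat (J : SparseJL μ n m s) (ε δ : ℝ) : ℝ :=
  sSup {v : ℝ | v ∈ Set.Icc (0:ℝ) 1 ∧ ∀ x : Fin n → ℝ, linf x ≤ v * l2 x →
    ENNReal.ofReal (1 - δ) <
      μ {ω | (1 - ε) * l2 x ≤ l2 (fun r => ∑ i, J.A ω r i * x i) ∧
             l2 (fun r => ∑ i, J.A ω r i * x i) ≤ (1 + ε) * l2 x}}

end SparseJL

/-- The vector `(v, …, v, 0, …, 0)` with `N` nonzero coordinates. -/
def vVec (n N : ℕ) (v : ℝ) : Fin n → ℝ := fun i => if (i : ℕ) < N then v else 0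

/-- Decreasing rearrangement of a finite tuple of reals. -/
def decSort {k : ℕ} (w : Fin k → ℝ) : Fin k → ℝ := w ∘ (Tuple.sort (fun i => -w i))

/-! Expanding `Z_r(x)^T` over words of `T` off-diagonal pairs `(i, j)`, independence turns the
expectation of a word into `∏ᵢ xᵢ^{mᵢ} E[(ηᵢσᵢ)^{mᵢ}]`, where `mᵢ` counts the occurrences of the
letter `i`. This vanishes unless every `mᵢ` is even, and is then `q^d ∏ᵢ xᵢ^{mᵢ}` with `q = s/m` and
`d ∈ [2, T]` the number of distinct letters. Bounding `xᵢ^{mᵢ} ≤ v^{mᵢ-2} xᵢ²`, counting at most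
`d^{2T}` words with a given support, and using `d! e_d(x²) ≤ ‖x‖₂^{2d} ≤ 1` gives
`E Z^T ≤ ∑_{d=2}^T d^{2T}/d! q^d v^{2(T-d)}`.

With `λ = s/(mTv²)` and `1/d! ≤ (e/d)^d`, the `d`-th term is at most `v^{2T} d^{2T} μ^d` where
`μ = eλT/d`. If `μ ≥ 1` it is bounded via `t = 1`; otherwise `t = ⌈T/d⌉ ≤ T/2` gives
`μ^d ≤ (eλt)^{T/t}` and `d ≤ 2T/t`, so the term is at most `(8e v² T²/t² λ^{1/t})^T`. Summing at
most `T ≤ 2^T` terms gives the constant `16e`. -/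

open scoped Nat

theorem sum_powersetCard_succ_insert_prod {ι R : Type*} [DecidableEq ι] [CommSemiring R]
    (y : ι → R) {a : ι} {s : Finset ι} (ha : a ∉ s) (d : ℕ) :
    ∑ D ∈ (insert a s).powersetCard (d + 1), ∏ i ∈ D, y i =
      ∑ D ∈ s.powersetCard (d + 1), ∏ i ∈ D, y i +
        y a * ∑ D ∈ s.powersetCard d, ∏ i ∈ D, y i := by
  have haD : ∀ D ∈ s.powersetCard d, a ∉ D :=
    fun D hD h => ha ((Finset.mem_powersetCard.1 hD).1 h)
  rw [Finset.powersetCard_succ_insert ha, Finset.sum_union, Finset.sum_image, Finset.mul_sum]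
  · exact congrArg _ (Finset.sum_congr rfl fun D hD => Finset.prod_insert (haD D hD))
  · exact fun D hD E hE h => by
      rw [← Finset.erase_insert (haD D hD), h, Finset.erase_insert (haD E hE)]
  · refine Finset.disjoint_left.2 fun D hD hD' => ?_
    obtain ⟨E, -, rfl⟩ := Finset.mem_image.1 hD'
    exact ha ((Finset.mem_powersetCard.1 hD).1 (Finset.mem_insert_self a E))

theorem factorial_mul_sum_powersetCard_prod_le {ι : Type*} [DecidableEq ι] (y : ι → ℝ)
    (hy : ∀ i, 0 ≤ y i) (s : Finset ι) (d : ℕ) :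
    d ! * ∑ D ∈ s.powersetCard d, ∏ i ∈ D, y i ≤ (∑ i ∈ s, y i) ^ d := by
  induction s using Finset.induction_on generalizing d with
  | empty =>
    cases d with
    | zero => simp
    | succ d => rw [Finset.powersetCard_eq_empty.2 (by simp)]; simp
  | @insert a s ha ih =>
    cases d with
    | zero => simp
    | succ d =>
      have hS : 0 ≤ ∑ i ∈ s, y i := Finset.sum_nonneg fun i _ => hy i
      have hya := hy a
      calc ((d + 1) ! : ℝ) * ∑ D ∈ (insert a s).powersetCard (d + 1), ∏ i ∈ D, y i
          = (d + 1) ! * ∑ D ∈ s.powersetCard (d + 1), ∏ i ∈ D, y i +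
              (d + 1) * y a * (d ! * ∑ D ∈ s.powersetCard d, ∏ i ∈ D, y i) := by
            rw [sum_powersetCard_succ_insert_prod y ha, Nat.factorial_succ]; push_cast; ring
        _ ≤ (∑ i ∈ s, y i) ^ (d + 1) + (d + 1) * y a * (∑ i ∈ s, y i) ^ d := by
            gcongr <;> exact ih _
        _ ≤ (∑ i ∈ insert a s, y i) ^ (d + 1) := by
            rw [Finset.sum_insert ha, add_comm (y a)]
            have := pow_add_mul_le_add_pow hS (by positivity : 0 ≤ 2 * ∑ i ∈ s, y i + y a) (d + 1)
            push_cast at this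
            linarith

/-- `E[(ησ)^m]` for `η ∈ {0, 1}` of mean `q` and an independent Rademacher sign `σ`. -/
def sparseSignMoment (q : ℝ) (m : ℕ) : ℝ := (if m = 0 then 1 else q) * if Even m then 1 else 0

namespace OffDiagWord

variable {ι : Type*} [Fintype ι] [DecidableEq ι] {T : ℕ}

def letterCount (g : Fin T → ι × ι) (i : ι) : ℕ :=
  #{k | (g k).1 = i} + #{k | (g k).2 = i}

def support (g : Fin T → ι × ι) : Finset ι := {i | letterCount g i ≠ 0}

theorem prod_mul_eq_prod_pow_letterCount {M : Type*} [CommMonoid M] (g : Fin T → ι × ι)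
    (F : ι → M) : ∏ k, F (g k).1 * F (g k).2 = ∏ i, F i ^ letterCount g i := by
  simp only [Finset.prod_mul_distrib, letterCount, pow_add,
    ← Fintype.prod_fiberwise' (fun k => (g k).1) F, ← Fintype.prod_fiberwise' (fun k => (g k).2) F]
  simp [Fintype.card_subtype]

theorem sum_letterCount (g : Fin T → ι × ι) : ∑ i, letterCount g i = 2 * T := by
  simp only [letterCount, Finset.sum_add_distrib]
  rw [← Finset.card_eq_sum_card_fiberwise (fun _ _ => mem_univ _),
    ← Finset.card_eq_sum_card_fiberwise (fun _ _ => mem_univ _)]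
  simp [two_mul]

theorem sum_support_letterCount (g : Fin T → ι × ι) :
    ∑ i ∈ support g, letterCount g i = 2 * T := by
  rw [support, Finset.sum_filter_of_ne fun i _ h => h, sum_letterCount]

theorem two_le_letterCount {g : Fin T → ι × ι} (heven : ∀ i, Even (letterCount g i)) {i : ι}
    (hi : i ∈ support g) : 2 ≤ letterCount g i := by
  obtain ⟨c, hc⟩ := heven i
  have := (Finset.mem_filter.1 hi).2
  omega

theorem fst_mem_support (g : Fin T → ι × ι) (k : Fin T) : (g k).1 ∈ support g := by
  simp [support, letterCount]

theorem snd_mem_support (g : Fin T → ι × ι) (k : Fin T) : (g k).2 ∈ support g := by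
  simp [support, letterCount]

theorem sum_offDiag_pow {R : Type*} [CommSemiring R] (c : ι → R) (T : ℕ) :
    (∑ p ∈ (univ : Finset ι).offDiag, c p.1 * c p.2) ^ T =
      ∑ g ∈ Fintype.piFinset fun _ : Fin T => (univ : Finset ι).offDiag,
        ∏ i, c i ^ letterCount g i := by
  rw [Finset.sum_pow']
  exact Finset.sum_congr rfl fun g _ => prod_mul_eq_prod_pow_letterCount g c

theorem two_le_card_support {g : Fin T → ι × ι}
    (hg : g ∈ Fintype.piFinset fun _ : Fin T => (univ : Finset ι).offDiag) (hT : 0 < T) :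
    2 ≤ (support g).card := by
  let k : Fin T := ⟨0, hT⟩
  have hk : (g k).1 ≠ (g k).2 := (Finset.mem_offDiag.1 (Fintype.mem_piFinset.1 hg k)).2.2
  exact Finset.one_lt_card.2 ⟨_, fst_mem_support g k, _, snd_mem_support g k, hk⟩

theorem card_support_le {g : Fin T → ι × ι} (heven : ∀ i, Even (letterCount g i)) :
    (support g).card ≤ T := by
  have := Finset.card_nsmul_le_sum _ _ 2 fun i hi => two_le_letterCount heven hi
  rw [smul_eq_mul, sum_support_letterCount] at this
  omega

theorem card_filter_support_eq_le (W : Finset (Fin T → ι × ι)) (D : Finset ι) :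
    #{g ∈ W | support g = D} ≤ D.card ^ (2 * T) := by
  calc #{g ∈ W | support g = D}
      ≤ (Fintype.piFinset fun _ : Fin T => D ×ˢ D).card := by
        refine Finset.card_le_card fun g hg => Fintype.mem_piFinset.2 fun k => ?_
        rw [(Finset.mem_filter.1 hg).2.symm]
        exact Finset.mem_product.2 ⟨fst_mem_support g k, snd_mem_support g k⟩
    _ = D.card ^ (2 * T) := by simp [Finset.card_product, pow_mul, sq]

theorem prod_pow_mul_sparseSignMoment_le {x : ι → ℝ} {v q : ℝ} (hq : 0 ≤ q)
    (hxv : ∀ i, |x i| ≤ v) {g : Fin T → ι × ι} (heven : ∀ i, Even (letterCount g i)) :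
    ∏ i, x i ^ letterCount g i * sparseSignMoment q (letterCount g i) ≤
      q ^ (support g).card * v ^ (2 * (T - (support g).card)) * ∏ i ∈ support g, x i ^ 2 := by
  have htwo : ∀ i ∈ support g, 2 ≤ letterCount g i := fun i hi => two_le_letterCount heven hi
  have hexp : ∑ i ∈ support g, (letterCount g i - 2) = 2 * (T - (support g).card) := by
    have h := sum_support_letterCount g
    rw [← Finset.sum_congr rfl fun i hi => Nat.sub_add_cancel (htwo i hi),
      Finset.sum_add_distrib, Finset.sum_const, smul_eq_mul] at h
    omega
  calc ∏ i, x i ^ letterCount g i * sparseSignMoment q (letterCount g i)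
      = ∏ i ∈ support g, x i ^ letterCount g i * sparseSignMoment q (letterCount g i) := by
        refine (Finset.prod_filter_of_ne fun i _ h => ?_).symm
        contrapose h
        simp [h, sparseSignMoment]
    _ = ∏ i ∈ support g, q * x i ^ letterCount g i := by
        refine Finset.prod_congr rfl fun i hi => ?_
        simp [sparseSignMoment, (Finset.mem_filter.1 hi).2, heven i, mul_comm]
    _ ≤ ∏ i ∈ support g, q * (v ^ (letterCount g i - 2) * x i ^ 2) := by
        refine Finset.prod_le_prod (fun i _ => mul_nonneg hq ((heven i).pow_nonneg _))
          fun i hi => ?_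
        rw [← Nat.sub_add_cancel (htwo i hi), pow_add, Nat.add_sub_cancel,
          ← ((Nat.even_sub (htwo i hi)).2 (by simp [heven i])).pow_abs]
        gcongr
        exact hxv i
    _ = q ^ (support g).card * v ^ (2 * (T - (support g).card)) * ∏ i ∈ support g, x i ^ 2 := by
        rw [Finset.prod_mul_distrib, Finset.prod_mul_distrib, Finset.prod_const,
          Finset.prod_pow_eq_pow_sum, hexp, mul_assoc]

theorem sum_filter_card_support_prod_sq_le {x : ι → ℝ} (hx : ∑ i, x i ^ 2 ≤ 1)
    (W : Finset (Fin T → ι × ι)) (d : ℕ) :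
    ∑ g ∈ W with (support g).card = d, ∏ i ∈ support g, x i ^ 2 ≤ (d : ℝ) ^ (2 * T) / d ! := by
  set Wd := {g ∈ W | (support g).card = d}
  have hmaps : ∀ g ∈ Wd, support g ∈ univ.powersetCard d :=
    fun g hg => Finset.mem_powersetCard.2 ⟨subset_univ _, (Finset.mem_filter.1 hg).2⟩
  have hesymm : ∑ D ∈ univ.powersetCard d, ∏ i ∈ D, x i ^ 2 ≤ 1 / d ! := by
    rw [le_div_iff₀ (by positivity), mul_comm]
    calc _ ≤ (∑ i, x i ^ 2) ^ d :=
          factorial_mul_sum_powersetCard_prod_le _ (fun i => sq_nonneg _) _ d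
      _ ≤ 1 := pow_le_one₀ (Finset.sum_nonneg fun i _ => sq_nonneg _) hx
  calc ∑ g ∈ Wd, ∏ i ∈ support g, x i ^ 2
      = ∑ D ∈ univ.powersetCard d, (#{g ∈ Wd | support g = D} : ℝ) * ∏ i ∈ D, x i ^ 2 := by
        rw [← Finset.sum_fiberwise_of_maps_to hmaps]
        refine Finset.sum_congr rfl fun D _ => ?_
        rw [← nsmul_eq_mul, ← Finset.sum_const]
        exact Finset.sum_congr rfl fun g hg => by rw [(Finset.mem_filter.1 hg).2]
    _ ≤ ∑ D ∈ univ.powersetCard d, (d : ℝ) ^ (2 * T) * ∏ i ∈ D, x i ^ 2 := by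
        refine Finset.sum_le_sum fun D hD => ?_
        gcongr
        rw [← (Finset.mem_powersetCard.1 hD).2]
        exact_mod_cast card_filter_support_eq_le Wd D
    _ ≤ (d : ℝ) ^ (2 * T) / d ! := by
        rw [← Finset.mul_sum, div_eq_mul_one_div]
        gcongr

theorem sum_prod_pow_mul_sparseSignMoment_le {x : ι → ℝ} {v q : ℝ} (hq : 0 ≤ q)
    (hxv : ∀ i, |x i| ≤ v) (hx : ∑ i, x i ^ 2 ≤ 1) (hT : 0 < T) :
    ∑ g ∈ Fintype.piFinset (fun _ : Fin T => (univ : Finset ι).offDiag),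
        ∏ i, x i ^ letterCount g i * sparseSignMoment q (letterCount g i) ≤
      ∑ d ∈ Icc 2 T, (d : ℝ) ^ (2 * T) / d ! * q ^ d * v ^ (2 * (T - d)) := by
  set W := Fintype.piFinset (fun _ : Fin T => (univ : Finset ι).offDiag)
  set E := {g ∈ W | ∀ i, Even (letterCount g i)}
  have heven_of_ne_zero : ∀ g ∈ W, ∏ i, x i ^ letterCount g i * sparseSignMoment q (letterCount g i) ≠ 0 →
      ∀ i, Even (letterCount g i) := fun g _ h i => by
    contrapose h
    exact Finset.prod_eq_zero (mem_univ i) (by simp [sparseSignMoment, h])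
  have hmaps : ∀ g ∈ E, (support g).card ∈ Icc 2 T := fun g hg =>
    Finset.mem_Icc.2 ⟨two_le_card_support (Finset.mem_filter.1 hg).1 hT,
      card_support_le (Finset.mem_filter.1 hg).2⟩
  calc _ = ∑ g ∈ E, ∏ i, x i ^ letterCount g i * sparseSignMoment q (letterCount g i) :=
        (Finset.sum_filter_of_ne heven_of_ne_zero).symm
    _ ≤ ∑ g ∈ E, q ^ (support g).card * v ^ (2 * (T - (support g).card)) *
          ∏ i ∈ support g, x i ^ 2 :=
        Finset.sum_le_sum fun g hg =>
          prod_pow_mul_sparseSignMoment_le hq hxv (Finset.mem_filter.1 hg).2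
    _ = ∑ d ∈ Icc 2 T, q ^ d * v ^ (2 * (T - d)) *
          ∑ g ∈ E with (support g).card = d, ∏ i ∈ support g, x i ^ 2 := by
        rw [← Finset.sum_fiberwise_of_maps_to hmaps]
        refine Finset.sum_congr rfl fun d _ => ?_
        rw [Finset.mul_sum]
        exact Finset.sum_congr rfl fun g hg => by rw [(Finset.mem_filter.1 hg).2]
    _ ≤ ∑ d ∈ Icc 2 T, q ^ d * v ^ (2 * (T - d)) * ((d : ℝ) ^ (2 * T) / d !) := by
        gcongr with d
        · exact mul_nonneg (pow_nonneg hq _) ((even_two_mul _).pow_nonneg _)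
        · exact sum_filter_card_support_prod_sq_le hx E d
    _ = _ := Finset.sum_congr rfl fun d _ => by ring

end OffDiagWord

theorem pow_two_mul_div_factorial_mul_pow_le {T d : ℕ} (hd : 0 < d) {a : ℝ} (ha : 0 ≤ a) :
    (d : ℝ) ^ (2 * T) / d ! * a ^ d ≤ ((d : ℝ) ^ 2) ^ T * (exp 1 * a / d) ^ d := by
  have hd' : (0 : ℝ) < d := by exact_mod_cast hd
  have hfact : (d : ℝ) ^ d / d ! ≤ exp 1 ^ d := by
    simpa [← Real.exp_nat_mul] using Real.pow_div_factorial_le_exp _ hd'.le d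
  calc (d : ℝ) ^ (2 * T) / d ! * a ^ d = ((d : ℝ) ^ 2) ^ T * (a / d) ^ d * ((d : ℝ) ^ d / d !) := by
        rw [div_pow, ← pow_mul]; field_simp
    _ ≤ ((d : ℝ) ^ 2) ^ T * (a / d) ^ d * exp 1 ^ d := by gcongr
    _ = ((d : ℝ) ^ 2) ^ T * (exp 1 * a / d) ^ d := by ring

theorem natCast_rpow_one_div_self_le_two (t : ℕ) : (t : ℝ) ^ ((1 : ℝ) / t) ≤ 2 := by
  rcases t.eq_zero_or_pos with rfl | ht
  · norm_num
  calc (t : ℝ) ^ ((1 : ℝ) / t) ≤ ((2 : ℝ) ^ t) ^ ((1 : ℝ) / t) := by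
        gcongr; exact_mod_cast t.lt_two_pow_self.le
    _ = 2 := by rw [one_div, Real.pow_rpow_inv_natCast (by norm_num) ht.ne']

theorem exists_le_half_and_le_mul_le_two_mul {T d : ℕ} (hT : Even T) (hd : 2 ≤ d) (hdT : d ≤ T) :
    ∃ t, 1 ≤ t ∧ t ≤ T / 2 ∧ T ≤ d * t ∧ d * t ≤ 2 * T := by
  obtain ⟨u, rfl⟩ := hT
  -- the witness is `⌈T / d⌉ = N / d` with `N = T + d - 1`
  obtain ⟨N, hN⟩ : ∃ N, N + 1 = u + u + d := ⟨u + u + d - 1, by omega⟩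
  have hdiv := Nat.div_add_mod N d
  have hmod := Nat.mod_lt N (by omega : 0 < d)
  generalize N / d = t at hdiv
  generalize N % d = r at hdiv hmod
  have h1 : 2 * t ≤ d * t := Nat.mul_le_mul_right t hd
  refine ⟨t, Nat.pos_of_ne_zero (by rintro rfl; omega), ?_, by omega, by omega⟩
  by_contra! ht
  have h2 := Nat.mul_le_mul_left d (show u + 1 ≤ t by omega)
  have h3 := Nat.mul_le_mul_right u hd
  rw [Nat.mul_add] at h2
  omega

theorem pow_le_two_mul_exp_one_mul_rpow_pow {μ lam : ℝ} {d t T : ℕ} (hμ0 : 0 ≤ μ) (hμ1 : μ ≤ 1)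
    (hlam : 0 ≤ lam) (ht : 1 ≤ t) (hTdt : T ≤ d * t) (hμt : μ ≤ exp 1 * t * lam) :
    μ ^ d ≤ (2 * exp 1 * lam ^ ((1 : ℝ) / t)) ^ T := by
  have ht0 : (0 : ℝ) < t := by exact_mod_cast ht
  have he : exp 1 ^ ((1 : ℝ) / t) ≤ exp 1 := by
    simpa using Real.rpow_le_rpow_of_exponent_le (Real.one_le_exp zero_le_one)
      (show (1 : ℝ) / t ≤ 1 from (div_le_one ht0).2 (by exact_mod_cast ht))
  have hroot : μ ^ ((1 : ℝ) / t) ≤ 2 * exp 1 * lam ^ ((1 : ℝ) / t) := by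
    calc μ ^ ((1 : ℝ) / t) ≤ (exp 1 * t * lam) ^ ((1 : ℝ) / t) := by gcongr
      _ = exp 1 ^ ((1 : ℝ) / t) * (t : ℝ) ^ ((1 : ℝ) / t) * lam ^ ((1 : ℝ) / t) := by
          rw [Real.mul_rpow (by positivity) hlam, Real.mul_rpow (by positivity) ht0.le]
      _ ≤ exp 1 * 2 * lam ^ ((1 : ℝ) / t) := by
          gcongr
          exact natCast_rpow_one_div_self_le_two t
      _ = 2 * exp 1 * lam ^ ((1 : ℝ) / t) := by ring
  calc μ ^ d ≤ (μ ^ ((1 : ℝ) / t)) ^ T := by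
        rw [← Real.rpow_natCast, ← Real.rpow_natCast, ← Real.rpow_mul hμ0]
        refine Real.rpow_le_rpow_of_exponent_ge' hμ0 hμ1 (by positivity) ?_
        rw [one_div_mul_eq_div, div_le_iff₀ ht0]
        exact_mod_cast hTdt
    _ ≤ (2 * exp 1 * lam ^ ((1 : ℝ) / t)) ^ T := by gcongr

theorem pow_two_mul_div_factorial_mul_pow_le_of_forall_le {T d : ℕ} (hT : Even T) (hd : 2 ≤ d)
    (hdT : d ≤ T) {lam Q : ℝ} (hlam : 0 ≤ lam)
    (hQ : ∀ t : ℕ, 1 ≤ t → t ≤ T / 2 → (T : ℝ) ^ 2 / t ^ 2 * lam ^ ((1 : ℝ) / t) ≤ Q) :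
    (d : ℝ) ^ (2 * T) / d ! * (lam * T) ^ d ≤ (8 * exp 1 * Q) ^ T := by
  have hd0 : (0 : ℝ) < d := by exact_mod_cast (by omega : 0 < d)
  have hdT' : (d : ℝ) ≤ T := by exact_mod_cast hdT
  have hQ1 : (T : ℝ) ^ 2 * lam ≤ Q := by
    simpa using hQ 1 le_rfl (by obtain ⟨u, rfl⟩ := hT; omega)
  have hQ0 : 0 ≤ Q := le_trans (by positivity) hQ1
  have he : (1 : ℝ) ≤ exp 1 := Real.one_le_exp zero_le_one
  set μ := exp 1 * (lam * T) / d with hμ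
  have hμ0 : 0 ≤ μ := by positivity
  refine (pow_two_mul_div_factorial_mul_pow_le (by omega) (by positivity)).trans ?_
  rcases le_or_gt 1 μ with hμ1 | hμ1
  · calc ((d : ℝ) ^ 2) ^ T * μ ^ d ≤ ((d : ℝ) ^ 2) ^ T * μ ^ T := by
          gcongr
      _ = (exp 1 * (d * (lam * T))) ^ T := by
          rw [← mul_pow, hμ]; field_simp
      _ ≤ (exp 1 * (T * (lam * T))) ^ T := by gcongr
      _ = (exp 1 * (T ^ 2 * lam)) ^ T := by ring
      _ ≤ (8 * exp 1 * Q) ^ T := by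
          gcongr
          nlinarith
  obtain ⟨t, ht1, htT, hTdt, hdt⟩ := exists_le_half_and_le_mul_le_two_mul hT hd hdT
  have ht0 : (0 : ℝ) < t := by exact_mod_cast ht1
  have hμt : μ ≤ exp 1 * t * lam := by
    rw [hμ, div_le_iff₀ hd0]
    have : (T : ℝ) ≤ d * t := by exact_mod_cast hTdt
    calc exp 1 * (lam * T) ≤ exp 1 * (lam * (d * t)) := by gcongr
      _ = exp 1 * t * lam * d := by ring
  have hμd : μ ^ d ≤ (2 * exp 1 * lam ^ ((1 : ℝ) / t)) ^ T :=
    pow_le_two_mul_exp_one_mul_rpow_pow hμ0 hμ1.le hlam ht1 hTdt hμt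
  have hd2 : (d : ℝ) ^ 2 ≤ 4 * ((T : ℝ) ^ 2 / t ^ 2) := by
    have : ((d : ℝ) * t) ^ 2 ≤ (2 * T) ^ 2 :=
      pow_le_pow_left₀ (by positivity) (by exact_mod_cast hdt) 2
    rw [mul_div_assoc', le_div_iff₀ (by positivity)]
    linarith
  calc ((d : ℝ) ^ 2) ^ T * μ ^ d ≤ ((d : ℝ) ^ 2) ^ T * (2 * exp 1 * lam ^ ((1 : ℝ) / t)) ^ T := by
        gcongr
    _ ≤ (4 * ((T : ℝ) ^ 2 / t ^ 2) * (2 * exp 1 * lam ^ ((1 : ℝ) / t))) ^ T := by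
        rw [← mul_pow]; gcongr
    _ = (8 * exp 1 * ((T : ℝ) ^ 2 / t ^ 2 * lam ^ ((1 : ℝ) / t))) ^ T := by ring
    _ ≤ (8 * exp 1 * Q) ^ T := by
        gcongr
        exact hQ t ht1 htT

theorem sum_Icc_pow_two_mul_div_factorial_mul_pow_le {T : ℕ} (hT : Even T) {lam Q : ℝ}
    (hlam : 0 ≤ lam)
    (hQ : ∀ t : ℕ, 1 ≤ t → t ≤ T / 2 → (T : ℝ) ^ 2 / t ^ 2 * lam ^ ((1 : ℝ) / t) ≤ Q) :
    ∑ d ∈ Icc 2 T, (d : ℝ) ^ (2 * T) / d ! * (lam * T) ^ d ≤ (16 * exp 1 * Q) ^ T := by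
  calc ∑ d ∈ Icc 2 T, (d : ℝ) ^ (2 * T) / d ! * (lam * T) ^ d
      ≤ ∑ d ∈ Icc 2 T, (8 * exp 1 * Q) ^ T := Finset.sum_le_sum fun d hd =>
        pow_two_mul_div_factorial_mul_pow_le_of_forall_le hT (Finset.mem_Icc.1 hd).1
          (Finset.mem_Icc.1 hd).2 hlam hQ
    _ ≤ 2 ^ T * (8 * exp 1 * Q) ^ T := by
        rw [Finset.sum_const, nsmul_eq_mul, Nat.card_Icc]
        refine mul_le_mul_of_nonneg_right ?_ (hT.pow_nonneg _)
        exact_mod_cast (show T + 1 - 2 ≤ 2 ^ T by have := T.lt_two_pow_self; omega)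
    _ = (16 * exp 1 * Q) ^ T := by rw [← mul_pow]; ring_nf

theorem le_sSup_of_mem_Icc (f : ℕ → ℝ) {a b t : ℕ} (hat : a ≤ t) (htb : t ≤ b) :
    f t ≤ sSup {z : ℝ | ∃ t : ℕ, a ≤ t ∧ t ≤ b ∧ z = f t} := by
  refine le_csSup (((Set.finite_Icc a b).image f).subset ?_).bddAbove ⟨t, hat, htb, rfl⟩
  rintro z ⟨t, h1, h2, rfl⟩
  exact ⟨t, ⟨h1, h2⟩, rfl⟩

section Moments

variable {Ω : Type*} [MeasurableSpace Ω] {μ : Measure Ω} [IsProbabilityMeasure μ]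

theorem ae_eq_one_or_eq_neg_one_of_measure_eq_half {b : Ω → ℝ} (hb : Measurable b)
    (h : μ {ω | b ω = 1} = 1 / 2 ∧ μ {ω | b ω = -1} = 1 / 2) :
    ∀ᵐ ω ∂μ, b ω = 1 ∨ b ω = -1 := by
  have hdisj : Disjoint {ω | b ω = 1} {ω | b ω = -1} :=
    Set.disjoint_left.2 fun ω (h1 : b ω = 1) (h2 : b ω = -1) => by norm_num [h1] at h2
  have hunion : μ ({ω | b ω = 1} ∪ {ω | b ω = -1}) = μ Set.univ := by
    rw [measure_union hdisj (hb (measurableSet_singleton _)), h.1, h.2, ENNReal.add_halves,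
      measure_univ]
  exact (ae_iff_measure_eq (by measurability)).2 hunion

theorem integral_eq_zero_of_measure_eq_half {b : Ω → ℝ} (hb : Measurable b)
    (h : μ {ω | b ω = 1} = 1 / 2 ∧ μ {ω | b ω = -1} = 1 / 2) : ∫ ω, b ω ∂μ = 0 := by
  have hA : MeasurableSet {ω | b ω = 1} := hb (measurableSet_singleton _)
  have hae : b =ᵐ[μ] fun ω => 2 * {ω | b ω = 1}.indicator 1 ω - 1 := by
    filter_upwards [ae_eq_one_or_eq_neg_one_of_measure_eq_half hb h] with ω hω
    rcases hω with hω | hω <;> simp [Set.indicator, hω] <;> norm_num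
  rw [integral_congr_ae hae, integral_sub ((integrable_const _).indicator hA |>.const_mul 2)
    (integrable_const _), integral_const_mul, integral_indicator_one hA, measureReal_def, h.1]
  norm_num

theorem integral_pow_of_measure_eq_half {b : Ω → ℝ} (hb : Measurable b)
    (h : μ {ω | b ω = 1} = 1 / 2 ∧ μ {ω | b ω = -1} = 1 / 2) (m : ℕ) :
    ∫ ω, b ω ^ m ∂μ = if Even m then 1 else 0 := by
  have hae : (fun ω => b ω ^ m) =ᵐ[μ] fun ω => if Even m then 1 else b ω := by
    filter_upwards [ae_eq_one_or_eq_neg_one_of_measure_eq_half hb h] with ω hω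
    split_ifs with hm
    · rcases hω with hω | hω <;> simp [hω, hm.neg_one_pow]
    · rcases hω with hω | hω <;> simp [hω, (Nat.not_even_iff_odd.1 hm).neg_one_pow]
  rw [integral_congr_ae hae]
  split_ifs
  · simp
  · exact integral_eq_zero_of_measure_eq_half hb h

theorem integral_pow_of_eq_zero_or_eq_one {a : Ω → ℝ} (ha : ∀ ω, a ω = 0 ∨ a ω = 1) (m : ℕ) :
    ∫ ω, a ω ^ m ∂μ = if m = 0 then 1 else ∫ ω, a ω ∂μ := by
  split_ifs with hm
  · simp [hm]
  · congr 1 with ω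
    rcases ha ω with h | h <;> simp [h, hm]

variable {ι : Type*} [Fintype ι] {a b : ι → Ω → ℝ} {q : ℝ}

theorem integral_prod_mul_pow_eq_prod_sparseSignMoment (ha_meas : ∀ i, Measurable (a i))
    (hb_meas : ∀ i, Measurable (b i)) (ha : ∀ i ω, a i ω = 0 ∨ a i ω = 1)
    (ha_mean : ∀ i, ∫ ω, a i ω ∂μ = q)
    (hb : ∀ i, μ {ω | b i ω = 1} = 1 / 2 ∧ μ {ω | b i ω = -1} = 1 / 2)
    (ha_indep : iIndepFun a μ) (hb_indep : iIndepFun b μ)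
    (hab : IndepFun (fun ω i => a i ω) (fun ω i => b i ω) μ) (m : ι → ℕ) :
    ∫ ω, (∏ i, a i ω ^ m i) * ∏ i, b i ω ^ m i ∂μ = ∏ i, sparseSignMoment q (m i) := by
  have hprod : ∀ ν : Measure (ι → ℝ), AEStronglyMeasurable (fun u : ι → ℝ => ∏ i, u i ^ m i) ν :=
    fun _ => (Finset.measurable_prod _ fun i _ => (measurable_pi_apply i).pow_const _)
      |>.aestronglyMeasurable
  have := hab.integral_comp_mul_comp (f := fun u : ι → ℝ => ∏ i, u i ^ m i)
    (g := fun u : ι → ℝ => ∏ i, u i ^ m i) (measurable_pi_lambda _ ha_meas).aemeasurable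
    (measurable_pi_lambda _ hb_meas).aemeasurable (hprod _) (hprod _)
  simp only [Function.comp_def, Pi.mul_apply] at this
  rw [this, ha_indep.integral_fun_prod_comp (f := fun i u => u ^ m i)
      (fun i => (ha_meas i).aemeasurable)
      (fun i => (measurable_id.pow_const (m i)).aestronglyMeasurable),
    hb_indep.integral_fun_prod_comp (f := fun i u => u ^ m i)
      (fun i => (hb_meas i).aemeasurable)
      (fun i => (measurable_id.pow_const (m i)).aestronglyMeasurable),
    ← Finset.prod_mul_distrib]
  refine Finset.prod_congr rfl fun i _ => ?_
  rw [integral_pow_of_eq_zero_or_eq_one (ha i), ha_mean,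
    integral_pow_of_measure_eq_half (hb_meas i) (hb i), sparseSignMoment]

theorem integral_sum_offDiag_pow_eq [DecidableEq ι] (ha_meas : ∀ i, Measurable (a i))
    (hb_meas : ∀ i, Measurable (b i)) (ha : ∀ i ω, a i ω = 0 ∨ a i ω = 1)
    (ha_mean : ∀ i, ∫ ω, a i ω ∂μ = q)
    (hb : ∀ i, μ {ω | b i ω = 1} = 1 / 2 ∧ μ {ω | b i ω = -1} = 1 / 2)
    (ha_indep : iIndepFun a μ) (hb_indep : iIndepFun b μ)
    (hab : IndepFun (fun ω i => a i ω) (fun ω i => b i ω) μ) (x : ι → ℝ) (T : ℕ) :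
    ∫ ω, (∑ p ∈ (univ : Finset ι).offDiag,
        x p.1 * (a p.1 ω * b p.1 ω) * (x p.2 * (a p.2 ω * b p.2 ω))) ^ T ∂μ =
      ∑ g ∈ Fintype.piFinset (fun _ : Fin T => (univ : Finset ι).offDiag),
        ∏ i, x i ^ OffDiagWord.letterCount g i *
          sparseSignMoment q (OffDiagWord.letterCount g i) := by
  have hab_le : ∀ᵐ ω ∂μ, ∀ i, |a i ω * b i ω| ≤ 1 := by
    filter_upwards [ae_all_iff.2 fun i =>
      ae_eq_one_or_eq_neg_one_of_measure_eq_half (hb_meas i) (hb i)] with ω hω i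
    rcases ha i ω with h | h <;> rcases hω i with h' | h' <;> simp [h, h']
  have hint : ∀ m : ι → ℕ, Integrable (fun ω => (∏ i, a i ω ^ m i) * ∏ i, b i ω ^ m i) μ := by
    intro m
    simp_rw [← Finset.prod_mul_distrib, ← mul_pow]
    refine Integrable.of_bound (by fun_prop) 1 ?_
    filter_upwards [hab_le] with ω hω
    rw [Real.norm_eq_abs, Finset.abs_prod]
    exact Finset.prod_le_one (fun i _ => abs_nonneg _) fun i _ => by
      rw [abs_pow]; exact pow_le_one₀ (abs_nonneg _) (hω i)
  simp_rw [fun ω => OffDiagWord.sum_offDiag_pow (fun i => x i * (a i ω * b i ω)) T, mul_pow,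
    Finset.prod_mul_distrib]
  rw [integral_finsetSum _ fun g _ => (hint _).const_mul _]
  refine Finset.sum_congr rfl fun g _ => ?_
  rw [integral_const_mul, integral_prod_mul_pow_eq_prod_sparseSignMoment ha_meas hb_meas ha ha_mean
    hb ha_indep hb_indep hab]

end Moments

theorem mom_le_of_integral_abs_pow_le {Ω : Type*} [MeasurableSpace Ω] {μ : Measure Ω}
    {X : Ω → ℝ} {T : ℕ} (hT : 0 < T) {B : ℝ} (hB : 0 ≤ B) (h : ∫ ω, |X ω| ^ T ∂μ ≤ B ^ T) :
    mom μ T X ≤ B := by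
  rw [mom]
  simp_rw [Real.rpow_natCast]
  calc (∫ ω, |X ω| ^ T ∂μ) ^ (1 / (T : ℝ)) ≤ (B ^ T) ^ (1 / (T : ℝ)) :=
        Real.rpow_le_rpow (integral_nonneg fun ω => by positivity) h (by positivity)
    _ = B := by rw [one_div, Real.pow_rpow_inv_natCast hB hT.ne']

namespace SparseJL

variable {Ω : Type*} [MeasurableSpace Ω] {μ : Measure Ω} {n m s : ℕ}

theorem Z_eq_sum_offDiag (J : SparseJL μ n m s) (r : Fin m) (x : Fin n → ℝ) (ω : Ω) :
    J.Z r x ω = ∑ p ∈ (univ : Finset (Fin n)).offDiag,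
      x p.1 * (J.η r p.1 ω * J.σ r p.1 ω) * (x p.2 * (J.η r p.2 ω * J.σ r p.2 ω)) := by
  rw [Z, ← Finset.sum_product', ← Finset.sum_filter]
  exact Finset.sum_congr (by ext p; simp [Finset.mem_offDiag]) fun p _ => by ring

theorem integral_Z_pow_le [IsProbabilityMeasure μ] (J : SparseJL μ n m s) (r : Fin m)
    {x : Fin n → ℝ} {v : ℝ} (hxv : ∀ i, |x i| ≤ v) (hx : ∑ i, x i ^ 2 ≤ 1) {T : ℕ}
    (hT : 0 < T) :
    ∫ ω, J.Z r x ω ^ T ∂μ ≤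
      ∑ d ∈ Icc 2 T, (d : ℝ) ^ (2 * T) / d ! * ((s : ℝ) / m) ^ d * v ^ (2 * (T - d)) := by
  have hη : iIndepFun (fun i => J.η r i) μ :=
    J.η_cols_indep.comp (fun _ u => u r) fun _ => measurable_pi_apply r
  have hσ : iIndepFun (fun i => J.σ r i) μ :=
    J.σ_indep.precomp (g := fun i => (r, i)) fun i j h => congrArg Prod.snd h
  have hrow : Measurable fun (u : Fin m × Fin n → ℝ) (i : Fin n) => u (r, i) :=
    measurable_pi_lambda _ fun i => measurable_pi_apply _
  have hησ : IndepFun (fun ω i => J.η r i ω) (fun ω i => J.σ r i ω) μ :=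
    J.σ_η_indep.symm.comp hrow hrow
  simp_rw [J.Z_eq_sum_offDiag]
  rw [integral_sum_offDiag_pow_eq (J.η_meas r) (J.σ_meas r) (J.η_bool r) (J.η_mean r)
    (J.σ_rademacher r) hη hσ hησ]
  exact OffDiagWord.sum_prod_pow_mul_sparseSignMoment_le (by positivity) hxv hx hT

theorem integral_Z_pow_le_of_forall_le [IsProbabilityMeasure μ] (J : SparseJL μ n m s)
    (r : Fin m) {x : Fin n → ℝ} {v : ℝ} (hv : 0 ≤ v) (hxv : ∀ i, |x i| ≤ v)
    (hx : ∑ i, x i ^ 2 ≤ 1) {T : ℕ} (hT : 0 < T) (hTe : Even T) {Q : ℝ}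
    (hQ : ∀ t : ℕ, 1 ≤ t → t ≤ T / 2 →
      (T : ℝ) ^ 2 / t ^ 2 * ((s : ℝ) / (m * T * v ^ 2)) ^ ((1 : ℝ) / t) ≤ Q) :
    ∫ ω, J.Z r x ω ^ T ∂μ ≤ (16 * exp 1 * (v ^ 2 * Q)) ^ T := by
  rcases hv.eq_or_lt with rfl | hv
  · have hx0 : x = 0 := funext fun i => abs_nonpos_iff.1 (hxv i)
    simp [hx0, Z, zero_pow hT.ne']
  set lam : ℝ := s / (m * T * v ^ 2)
  have hq : (s : ℝ) / m = lam * T * v ^ 2 := by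
    have : (0 : ℝ) < T := by exact_mod_cast hT
    have : (0 : ℝ) < m := by exact_mod_cast r.pos
    simp only [lam]
    field_simp
  calc ∫ ω, J.Z r x ω ^ T ∂μ
      ≤ ∑ d ∈ Icc 2 T, (d : ℝ) ^ (2 * T) / d ! * ((s : ℝ) / m) ^ d * v ^ (2 * (T - d)) :=
        J.integral_Z_pow_le r hxv hx hT
    _ = (v ^ 2) ^ T * ∑ d ∈ Icc 2 T, (d : ℝ) ^ (2 * T) / d ! * (lam * T) ^ d := by
        rw [Finset.mul_sum]
        refine Finset.sum_congr rfl fun d hd => ?_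
        have hvT : (v ^ 2) ^ T = (v ^ 2) ^ d * v ^ (2 * (T - d)) := by
          rw [← pow_mul, ← pow_mul, ← pow_add]
          congr 1
          have := (Finset.mem_Icc.1 hd).2
          omega
        rw [hvT, hq]
        ring
    _ ≤ (v ^ 2) ^ T * (16 * exp 1 * Q) ^ T := by
        gcongr
        exact sum_Icc_pow_two_mul_div_factorial_mul_pow_le hTe (by positivity) hQ
    _ = (16 * exp 1 * (v ^ 2 * Q)) ^ T := by ring

theorem mom_Z_le_of_forall_le [IsProbabilityMeasure μ] (J : SparseJL μ n m s)
    (r : Fin m) {x : Fin n → ℝ} {v : ℝ} (hv : 0 ≤ v) (hxv : ∀ i, |x i| ≤ v)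
    (hx : ∑ i, x i ^ 2 ≤ 1) {T : ℕ} (hT : 0 < T) (hTe : Even T) {Q : ℝ}
    (hQ : ∀ t : ℕ, 1 ≤ t → t ≤ T / 2 →
      (T : ℝ) ^ 2 / t ^ 2 * ((s : ℝ) / (m * T * v ^ 2)) ^ ((1 : ℝ) / t) ≤ Q) :
    mom μ T (J.Z r x) ≤ 16 * exp 1 * (v ^ 2 * Q) := by
  have hQ0 : 0 ≤ Q :=
    le_trans (by positivity) (hQ 1 le_rfl (by obtain ⟨u, rfl⟩ := hTe; omega))
  refine mom_le_of_integral_abs_pow_le hT (by positivity) ?_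
  simp_rw [hTe.pow_abs]
  exact J.integral_Z_pow_le_of_forall_le r hv hxv hx hT hTe hQ

end SparseJL

/-- Lemma 19 of the paper, sup-form row moment upper bound. -/
theorem statement10 :
    ∃ C : ℝ, 0 < C ∧
      ∀ (n m s T : ℕ) (v : ℝ) (Ω : Type) (_ : MeasurableSpace Ω) (μ : Measure Ω)
        (_ : IsProbabilityMeasure μ) (J : SparseJL μ n m s) (r : Fin m) (x : Fin n → ℝ),
        linf x ≤ v → l2 x ≤ 1 → 0 < T → Even T →
        mom μ (T : ℝ) (J.Z r x) ≤ C *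
          (v ^ 2 * sSup {z : ℝ | ∃ t : ℕ, 1 ≤ t ∧ t ≤ T / 2 ∧
            z = ((T : ℝ) ^ 2 / (t : ℝ) ^ 2) *
              ((s : ℝ) / ((m : ℝ) * T * v ^ 2)) ^ ((1 : ℝ) / t)}) := by
  refine ⟨16 * exp 1, by positivity, ?_⟩
  intro n m s T v Ω _ μ _ J r x hlinf hl2 hT hTe
  have hxv : ∀ i, |x i| ≤ v := fun i => (le_ciSup (Set.finite_range _).bddAbove i).trans hlinf
  have hv : 0 ≤ v := (Real.iSup_nonneg fun i => abs_nonneg (x i)).trans hlinf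
  exact J.mom_Z_le_of_forall_le r hv hxv (Real.sqrt_le_one.1 hl2) hT hTe fun t =>
    le_sSup_of_mem_Icc
      (fun t : ℕ => (T : ℝ) ^ 2 / t ^ 2 * ((s : ℝ) / (m * T * v ^ 2)) ^ ((1 : ℝ) / t))
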